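/- arXiv:2511.01130 — 5 statements merged into one kernel-verified Lean document; each statement's English description precedes it below -/
import Mathlib

section
/- For every t ∈ [0,1), the cone Γ_t contains the open Euclidean ball of radius (1−t)/(2n) centered at (0,…,0,1); moreover, f_t(λ) ≥ (1/2)(1−t) f(e) for every λ in this ball. -/
set_option maxHeartbeats 1000000

open Real Set Filter

/-- Any continuous linear functional applied to a vector decomposes over coordinates. -/
lemma fderiv_decomp {n : ℕ} (L : EuclideanSpace ℝ (Fin n) →L[ℝ] ℝ)
    (v : EuclideanSpace ℝ (Fin n)) :
    L v = ∑ i, v i * L (EuclideanSpace.single i 1) := by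
  have hv : v = ∑ i, v i • EuclideanSpace.single i (1 : ℝ) := by
    ext j
    have : (∑ i, v i • EuclideanSpace.single i (1 : ℝ)) j
        = ∑ i, (v i • EuclideanSpace.single i (1 : ℝ)) j := by
      rw [WithLp.ofLp_sum]; exact Finset.sum_apply j Finset.univ _
    rw [this]
    simp [EuclideanSpace.single_apply]
  conv_lhs => rw [hv]
  rw [map_sum]
  simp [smul_eq_mul]

/-- Monotonicity of f along coordinatewise increases in the positive orthant. -/
lemma f_mono {n : ℕ}
    (Γ : Set (EuclideanSpace ℝ (Fin n)))
    (hΓ_open : IsOpen Γ)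
    (hΓn : {x : EuclideanSpace ℝ (Fin n) | ∀ i, 0 < x i} ⊆ Γ)
    (f : EuclideanSpace ℝ (Fin n) → ℝ)
    (hf_smooth : ContDiffOn ℝ (⊤ : ℕ∞) f Γ)
    (hf2 : ∀ x ∈ Γ, ∀ i, 0 < fderiv ℝ f x (EuclideanSpace.single i 1))
    (a b : EuclideanSpace ℝ (Fin n)) (ha : ∀ i, 0 < a i) (hab : ∀ i, a i ≤ b i) :
    f a ≤ f b := by
  set L : ℝ → EuclideanSpace ℝ (Fin n) := fun u => a + u • (b - a) with hL
  have hLmem : ∀ u ∈ Icc (0 : ℝ) 1, L u ∈ Γ := by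
    intro u hu
    apply hΓn
    intro i
    have : (L u) i = a i + u * (b i - a i) := by simp [hL]
    rw [this]
    nlinarith [ha i, hab i, hu.1, hu.2]
  have hderiv : ∀ u ∈ Icc (0 : ℝ) 1,
      HasDerivAt (f ∘ L) ((fderiv ℝ f (L u)) (b - a)) u := by
    intro u hu
    have hdf : DifferentiableAt ℝ f (L u) := by
      have := (hf_smooth.differentiableOn (by simp))
      exact (this.differentiableAt (hΓ_open.mem_nhds (hLmem u hu)))
    have hLd : HasDerivAt L (b - a) u := by
      have h1 : HasDerivAt (fun u : ℝ => u • (b - a)) ((1 : ℝ) • (b - a)) u :=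
        (hasDerivAt_id u).smul_const (b - a)
      simpa [hL, one_smul] using h1.const_add a
    exact (hdf.hasFDerivAt.comp_hasDerivAt u hLd)
  have hmono : MonotoneOn (f ∘ L) (Icc (0 : ℝ) 1) := by
    apply monotoneOn_of_deriv_nonneg (convex_Icc 0 1)
    · intro u hu
      exact ((hderiv u hu).continuousAt).continuousWithinAt
    · intro u hu
      rw [interior_Icc] at hu
      exact ((hderiv u (Ioo_subset_Icc_self hu)).differentiableAt).differentiableWithinAt
    · intro u hu
      rw [interior_Icc] at hu
      rw [(hderiv u (Ioo_subset_Icc_self hu)).deriv]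
      rw [fderiv_decomp]
      apply Finset.sum_nonneg
      intro i _
      have h1 : (b - a) i = b i - a i := by simp
      rw [h1]
      exact mul_nonneg (by linarith [hab i]) (le_of_lt (hf2 _ (hLmem u (Ioo_subset_Icc_self hu)) i))
  have h01 := hmono (left_mem_Icc.mpr zero_le_one) (right_mem_Icc.mpr zero_le_one) zero_le_one
  simpa [hL] using h01

/-- For every t ∈ [0,1), the cone Γ_t contains the open Euclidean ball of radius
(1−t)/(2n) centered at (0,…,0,1); moreover f_t(λ) ≥ (1/2)(1−t) f(e) on this ball. -/
theorem Gamma_t_contains_ball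
    {n : ℕ} (hn : 2 ≤ n)
    (Γ : Set (EuclideanSpace ℝ (Fin n)))
    (hΓ_open : IsOpen Γ)
    (hΓ_convex : Convex ℝ Γ)
    (hΓ_cone : ∀ s : ℝ, 0 < s → ∀ x ∈ Γ, s • x ∈ Γ)
    (hΓ_symm : ∀ σ : Equiv.Perm (Fin n), ∀ x ∈ Γ, WithLp.toLp 2 (fun i => x (σ i)) ∈ Γ)
    (hΓn : {x : EuclideanSpace ℝ (Fin n) | ∀ i, 0 < x i} ⊆ Γ)
    (hΓ1 : Γ ⊆ {x : EuclideanSpace ℝ (Fin n) | 0 < ∑ i, x i})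
    (f : EuclideanSpace ℝ (Fin n) → ℝ)
    (hf_smooth : ContDiffOn ℝ (⊤ : ℕ∞) f Γ)
    (hf_symm : ∀ σ : Equiv.Perm (Fin n), ∀ x ∈ Γ, f (WithLp.toLp 2 (fun i => x (σ i))) = f x)
    (hf2 : ∀ x ∈ Γ, ∀ i, 0 < fderiv ℝ f x (EuclideanSpace.single i 1))
    (hf4 : ∀ s : ℝ, 0 < s → ∀ x ∈ Γ, f (s • x) = s * f x)
    (e : EuclideanSpace ℝ (Fin n)) (he : e = WithLp.toLp 2 (fun _ => 1))
    (c : EuclideanSpace ℝ (Fin n)) (hc : c = WithLp.toLp 2 (fun i : Fin n => if (i : ℕ) = n - 1 then (1 : ℝ) else 0)) :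
    ∀ t ∈ Ico (0 : ℝ) 1, ∀ x ∈ Metric.ball c ((1 - t) / (2 * n)),
      (t • x + ((1 - t) * ∑ i, x i) • e) ∈ Γ ∧
      (1 / 2) * (1 - t) * f e ≤ f (t • x + ((1 - t) * ∑ i, x i) • e) := by
  intro t ht x hx
  obtain ⟨ht0, ht1⟩ := ht
  have hn2 : (2 : ℝ) ≤ (n : ℝ) := by exact_mod_cast hn
  have hnpos : (0 : ℝ) < n := by linarith
  set r : ℝ := (1 - t) / (2 * n) with hr
  have hrpos : 0 < r := by apply div_pos (by linarith) (by positivity)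
  -- coordinatewise bound from the ball
  have hxc : ∀ i, |x i - c i| < r := by
    intro i
    have h1 : ‖x - c‖ < r := by
      have := hx
      rw [Metric.mem_ball, dist_eq_norm] at this
      exact this
    have h2 : |(x - c) i| ≤ ‖x - c‖ := by
      have h3 : ((x - c) i : ℝ) = inner ℝ (EuclideanSpace.single i (1 : ℝ)) (x - c) := by
        rw [EuclideanSpace.inner_single_left]
        simp
      calc |(x - c) i| = |(inner ℝ (EuclideanSpace.single i (1 : ℝ)) (x - c) : ℝ)| := by rw [h3]
        _ ≤ ‖EuclideanSpace.single i (1 : ℝ)‖ * ‖x - c‖ := abs_real_inner_le_norm _ _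
        _ = ‖x - c‖ := by rw [EuclideanSpace.norm_single]; simp
    have h4 : ((x - c) i : ℝ) = x i - c i := by simp
    rw [h4] at h2
    linarith
  -- sum of c
  have hcsum : ∑ i, c i = 1 := by
    rw [hc]
    rw [Fintype.sum_eq_single (⟨n - 1, by omega⟩ : Fin n)]
    · simp
    · intro b hb
      dsimp only
      rw [if_neg]
      intro h
      exact hb (Fin.ext h)
  set σ : ℝ := ∑ i, x i with hσ
  have hσ1 : |σ - 1| < (1 - t) / 2 := by
    have h1 : σ - 1 = ∑ i, (x i - c i) := by
      rw [Finset.sum_sub_distrib, hcsum, hσ]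
    rw [h1]
    calc |∑ i, (x i - c i)| ≤ ∑ i, |x i - c i| := Finset.abs_sum_le_sum_abs _ _
      _ < ∑ _i : Fin n, r := by
          haveI : Nonempty (Fin n) := ⟨⟨0, by omega⟩⟩
          apply Finset.sum_lt_sum_of_nonempty
          · exact Finset.univ_nonempty
          · intro i _; exact hxc i
      _ = n * r := by rw [Finset.sum_const]; simp [mul_comm]
      _ = (1 - t) / 2 := by rw [hr]; field_simp
  have hσlb : (1 + t) / 2 < σ := by
    have := abs_lt.mp hσ1
    linarith [this.1]
  set y : EuclideanSpace ℝ (Fin n) := t • x + ((1 - t) * σ) • e with hy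
  have hyi : ∀ i, (1 - t) / 2 ≤ y i := by
    intro i
    have h1 : y i = t * x i + (1 - t) * σ := by
      simp [hy, he, PiLp.add_apply, PiLp.smul_apply, smul_eq_mul]
    have h2 : c i - r < x i := by
      have := abs_lt.mp (hxc i); linarith [this.1]
    have h3 : 0 ≤ c i := by
      rw [hc]; dsimp only; split <;> norm_num
    have h4 : -r < x i := by linarith
    have h5 : t * (-r) ≤ t * x i := by nlinarith
    have h6 : (1 - t) * ((1 + t) / 2) ≤ (1 - t) * σ := by nlinarith
    have h7 : t * r ≤ t * (1 - t) / 2 := by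
      rw [hr, ← mul_div_assoc]
      apply div_le_div_of_nonneg_left ?_ (by norm_num) (by linarith)
      nlinarith
    rw [h1]
    nlinarith
  have hypos : ∀ i, 0 < y i := fun i => lt_of_lt_of_le (by linarith) (hyi i)
  have hyΓ : y ∈ Γ := hΓn hypos
  constructor
  · exact hyΓ
  · -- compare with ((1-t)/2) • e
    have heΓ : e ∈ Γ := by
      apply hΓn; intro i; rw [he]; norm_num
    have hs : (0 : ℝ) < (1 - t) / 2 := by linarith
    have hfe : f (((1 - t) / 2) • e) = ((1 - t) / 2) * f e := hf4 _ hs e heΓ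
    have hmono := f_mono Γ hΓ_open hΓn f hf_smooth hf2 (((1 - t) / 2) • e) y
      (by intro i; simp [he, smul_eq_mul]; linarith)
      (by intro i
          have : (((1 - t) / 2) • e) i = (1 - t) / 2 := by simp [he, smul_eq_mul]
          rw [this]; exact hyi i)
    rw [hfe] at hmono
    calc (1 / 2) * (1 - t) * f e = ((1 - t) / 2) * f e := by ring
      _ ≤ f y := hmono
end

section
/- For every ascending λ' ∈ Γ', the distance from λ' to ∂Γ' equals the infimum of γ·λ' taken over all ascending λ'_0 ∈ ∂Γ' and all descending γ ∈ N_{λ'_0}(∂Γ'); i.e. d_{Γ'}(λ') = inf{ γ·λ' : λ'_0 ∈ ∂Γ' ascending, γ ∈ N_{λ'_0}(∂Γ') descending }. -/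
open Real Set Filter Topology

private lemma es_inner_eq_sum {m : ℕ} (γ x : EuclideanSpace ℝ (Fin m)) :
    (inner ℝ γ x : ℝ) = ∑ i, γ i * x i := by
  simp [PiLp.inner_apply, RCLike.inner_apply, conj_trivial, mul_comm]

private lemma es_sum_sq_of_norm_one {m : ℕ} (γ : EuclideanSpace ℝ (Fin m)) (h : ‖γ‖ = 1) :
    ∑ i, γ i * γ i = 1 := by
  have := EuclideanSpace.norm_eq γ
  rw [h] at this
  have h2 : ∑ i, ‖γ i‖ ^ 2 = 1 := by
    nlinarith [Real.sq_sqrt (by positivity : (0:ℝ) ≤ ∑ i, ‖γ i‖ ^ 2),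
      Real.sqrt_nonneg (∑ i, ‖γ i‖ ^ 2)]
  calc ∑ i, γ i * γ i = ∑ i, ‖γ i‖ ^ 2 := by simp [sq_abs, sq]
    _ = 1 := h2

/-- Key facts about a supporting pair at the boundary of the cone. -/
private lemma pair_facts {m : ℕ} (Γ' : Set (EuclideanSpace ℝ (Fin m)))
    (hΓ'_cone : ∀ s : ℝ, 0 < s → ∀ x ∈ Γ', s • x ∈ Γ')
    {l : EuclideanSpace ℝ (Fin m)} (hl : l ∈ Γ')
    {l₀ γ : EuclideanSpace ℝ (Fin m)} (hl₀ : l₀ ∈ frontier Γ')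
    (hγ : ∀ x ∈ Γ', 0 < ∑ i, γ i * (x i - l₀ i)) :
    (∑ i, γ i * l₀ i = 0) ∧ ∀ x ∈ Γ', 0 < ∑ i, γ i * x i := by
  set c : ℝ := ∑ i, γ i * l₀ i with hc
  have hgt : ∀ x ∈ Γ', c < ∑ i, γ i * x i := by
    intro x hx
    have h1 := hγ x hx
    have h2 : ∑ i, γ i * (x i - l₀ i) = (∑ i, γ i * x i) - c := by
      rw [hc, ← Finset.sum_sub_distrib]
      exact Finset.sum_congr rfl fun i _ => by ring
    rw [h2] at h1; linarith
  have hscale : ∀ x ∈ Γ', ∀ s : ℝ, 0 < s → c < s * ∑ i, γ i * x i := by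
    intro x hx s hs
    have h1 := hgt _ (hΓ'_cone s hs x hx)
    have h2 : ∑ i, γ i * (s • x) i = s * ∑ i, γ i * x i := by
      rw [Finset.mul_sum]
      exact Finset.sum_congr rfl fun i _ => by
        simp [PiLp.smul_apply, smul_eq_mul]; ring
    rwa [h2] at h1
  have hnonneg : ∀ x ∈ Γ', 0 ≤ ∑ i, γ i * x i := by
    intro x hx
    by_contra h
    push_neg at h
    set T : ℝ := ∑ i, γ i * x i with hT
    have hs : 0 < (|c| + 1) / (-T) := div_pos (by positivity) (by linarith)
    have h1 := hscale x hx _ hs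
    have h2 : (|c| + 1) / (-T) * T = -(|c| + 1) := by
      rw [div_neg, neg_mul, div_mul_cancel₀ _ h.ne]
    rw [h2] at h1
    have := neg_abs_le c
    linarith
  have hc_nonpos : c ≤ 0 := by
    by_contra h
    push_neg at h
    set T : ℝ := ∑ i, γ i * l i with hT
    have hT0 : 0 ≤ T := hnonneg l hl
    have hs : 0 < c / (2 * (T + 1)) := div_pos h (by linarith)
    have h1 := hscale l hl _ hs
    rw [div_mul_eq_mul_div, lt_div_iff₀ (by linarith : (0:ℝ) < 2 * (T + 1))] at h1
    nlinarith
  have hc_nonneg : 0 ≤ c := by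
    have hsub : Γ' ⊆ {x : EuclideanSpace ℝ (Fin m) | (0:ℝ) ≤ inner ℝ γ x} := by
      intro x hx
      rw [mem_setOf_eq, es_inner_eq_sum]
      exact hnonneg x hx
    have hclosed : IsClosed {x : EuclideanSpace ℝ (Fin m) | (0:ℝ) ≤ inner ℝ γ x} :=
      isClosed_le continuous_const (Continuous.inner continuous_const continuous_id)
    have hcl := closure_minimal hsub hclosed (frontier_subset_closure hl₀)
    rw [mem_setOf_eq, es_inner_eq_sum] at hcl
    exact hcl
  have hc0 : c = 0 := le_antisymm hc_nonpos hc_nonneg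
  exact ⟨hc0, fun x hx => hc0 ▸ hgt x hx⟩

/-- For every ascending λ' ∈ Γ', the distance from λ' to ∂Γ' equals the infimum of
γ·λ' over all ascending λ'_0 ∈ ∂Γ' and all descending γ ∈ N_{λ'_0}(∂Γ'). -/
theorem dist_to_boundary_eq_inf
    {m : ℕ} (hm : 1 ≤ m)
    (Γ' : Set (EuclideanSpace ℝ (Fin m)))
    (hΓ'_open : IsOpen Γ')
    (hΓ'_convex : Convex ℝ Γ')
    (hΓ'_cone : ∀ s : ℝ, 0 < s → ∀ x ∈ Γ', s • x ∈ Γ')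
    (hΓ'_symm : ∀ σ : Equiv.Perm (Fin m), ∀ x ∈ Γ', WithLp.toLp 2 (fun i => x (σ i)) ∈ Γ')
    (hΓ'n : {x : EuclideanSpace ℝ (Fin m) | ∀ i, 0 < x i} ⊆ Γ')
    (hΓ'1 : Γ' ⊆ {x : EuclideanSpace ℝ (Fin m) | 0 < ∑ i, x i})
    (hΓ'_ne : Γ' ≠ Set.univ)
    (l : EuclideanSpace ℝ (Fin m)) (hl : l ∈ Γ') (hl_asc : Monotone (fun i => l i)) :
    Metric.infDist l (frontier Γ') =
      sInf {r : ℝ |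
        ∃ l₀ γ : EuclideanSpace ℝ (Fin m),
          l₀ ∈ frontier Γ' ∧ Monotone (fun i => l₀ i) ∧
          ‖γ‖ = 1 ∧ (∀ x ∈ Γ', 0 < ∑ i, γ i * (x i - l₀ i)) ∧
          Antitone (fun i => γ i) ∧
          r = ∑ i, γ i * l i} := by
  classical
  set S := {r : ℝ |
        ∃ l₀ γ : EuclideanSpace ℝ (Fin m),
          l₀ ∈ frontier Γ' ∧ Monotone (fun i => l₀ i) ∧
          ‖γ‖ = 1 ∧ (∀ x ∈ Γ', 0 < ∑ i, γ i * (x i - l₀ i)) ∧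
          Antitone (fun i => γ i) ∧
          r = ∑ i, γ i * l i} with hS
  -- 0 is on the frontier
  have h0notin : (0 : EuclideanSpace ℝ (Fin m)) ∉ Γ' := by
    intro h0
    have := hΓ'1 h0
    simp at this
  have h0cl : (0 : EuclideanSpace ℝ (Fin m)) ∈ closure Γ' := by
    have htend : Tendsto (fun n : ℕ => ((n : ℝ) + 1)⁻¹ • l) atTop (𝓝 (0 : EuclideanSpace ℝ (Fin m))) := by
      have h1 : Tendsto (fun n : ℕ => ((n : ℝ) + 1)⁻¹) atTop (𝓝 (0 : ℝ)) :=
        tendsto_one_div_add_atTop_nhds_zero_nat.congr (fun n => by rw [one_div])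
      have := h1.smul_const l
      rwa [zero_smul] at this
    exact mem_closure_of_tendsto htend
      (Eventually.of_forall fun n => hΓ'_cone _ (by positivity) l hl)
  have h0front : (0 : EuclideanSpace ℝ (Fin m)) ∈ frontier Γ' := by
    rw [hΓ'_open.frontier_eq]
    exact ⟨h0cl, h0notin⟩
  -- frontier is nonempty and closed; get the nearest point q
  obtain ⟨q, hq_front, hq_dist⟩ :=
    isClosed_frontier.exists_infDist_eq_dist ⟨0, h0front⟩ l
  have hq_notin : q ∉ Γ' := by
    rw [hΓ'_open.frontier_eq] at hq_front
    exact hq_front.2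
  -- separating functional
  obtain ⟨f, hf⟩ := geometric_hahn_banach_open_point hΓ'_convex hΓ'_open hq_notin
  set v : EuclideanSpace ℝ (Fin m) := (InnerProductSpace.toDual ℝ (EuclideanSpace ℝ (Fin m))).symm f with hv
  have hv_apply : ∀ x : EuclideanSpace ℝ (Fin m), (inner ℝ v x : ℝ) = f x := fun x => by
    rw [hv]; exact InnerProductSpace.toDual_symm_apply
  have hv_ne : v ≠ 0 := by
    intro h0
    have h1 := hv_apply l
    have h2 := hv_apply q
    rw [h0, inner_zero_left] at h1 h2
    have := hf l hl
    rw [← h1, ← h2] at this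
    exact lt_irrefl _ this
  set w : EuclideanSpace ℝ (Fin m) := -v with hw
  set γ₁ : EuclideanSpace ℝ (Fin m) := ‖w‖⁻¹ • w with hγ₁
  have hw_norm : 0 < ‖w‖ := by
    rw [hw, norm_neg]
    exact norm_pos_iff.mpr hv_ne
  have hγ₁_norm : ‖γ₁‖ = 1 := by
    rw [hγ₁, norm_smul, norm_inv, norm_norm, inv_mul_cancel₀ hw_norm.ne']
  have hγ₁_sep : ∀ x ∈ Γ', 0 < ∑ i, γ₁ i * (x i - q i) := by
    intro x hx
    have h1 : (inner ℝ γ₁ (x - q) : ℝ) = ‖w‖⁻¹ * (f q - f x) := by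
      rw [hγ₁, inner_smul_left, RCLike.conj_to_real, inner_sub_right, hw,
        inner_neg_left, inner_neg_left, hv_apply, hv_apply]
      ring
    have h2 : (0:ℝ) < ‖w‖⁻¹ * (f q - f x) :=
      mul_pos (inv_pos.mpr hw_norm) (by linarith [hf x hx])
    rw [← h1, es_inner_eq_sum] at h2
    have h4 : ∑ i, γ₁ i * (x - q) i = ∑ i, γ₁ i * (x i - q i) :=
      Finset.sum_congr rfl fun i _ => by simp
    rw [h4] at h2
    exact h2
  obtain ⟨hγ₁q, hγ₁pos⟩ := pair_facts Γ' hΓ'_cone hl hq_front hγ₁_sep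
  -- γ₁ · l is at most the distance
  have hγ₁l_le : ∑ i, γ₁ i * l i ≤ Metric.infDist l (frontier Γ') := by
    have h1 : (inner ℝ γ₁ l : ℝ) = (inner ℝ γ₁ (l - q) : ℝ) + (inner ℝ γ₁ q : ℝ) := by
      rw [inner_sub_right]; ring
    have h2 : (inner ℝ γ₁ q : ℝ) = 0 := by rw [es_inner_eq_sum]; exact hγ₁q
    have h3 : (inner ℝ γ₁ (l - q) : ℝ) ≤ ‖γ₁‖ * ‖l - q‖ := real_inner_le_norm _ _
    have h4 : ‖γ₁‖ * ‖l - q‖ = dist l q := by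
      rw [hγ₁_norm, one_mul, dist_eq_norm]
    rw [← es_inner_eq_sum, h1, h2, add_zero, hq_dist, ← h4]
    exact h3
  -- sort γ₁ into descending order
  set σ : Equiv.Perm (Fin m) := Tuple.sort (fun i => -γ₁ i) with hσ
  set γ₂ : EuclideanSpace ℝ (Fin m) := WithLp.toLp 2 (fun i => γ₁ (σ i)) with hγ₂
  have hγ₂_anti : Antitone (fun i => γ₂ i) := by
    have h1 : Monotone ((fun i => -γ₁ i) ∘ σ) := Tuple.monotone_sort _
    intro a b hab
    have := h1 hab
    simp only [Function.comp_apply] at this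
    simpa [hγ₂] using this
  have hγ₂_norm : ‖γ₂‖ = 1 := by
    rw [EuclideanSpace.norm_eq]
    have hsum : ∑ i, ‖γ₂ i‖ ^ 2 = ∑ i, ‖γ₁ i‖ ^ 2 :=
      Equiv.sum_comp σ (fun i => ‖γ₁ i‖ ^ 2)
    rw [hsum, ← EuclideanSpace.norm_eq, hγ₁_norm]
  have hγ₂_pos : ∀ x ∈ Γ', 0 < ∑ i, γ₂ i * (x i - (0 : EuclideanSpace ℝ (Fin m)) i) := by
    intro x hx
    set y : EuclideanSpace ℝ (Fin m) := WithLp.toLp 2 (fun i => x (σ.symm i)) with hy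
    have hy_mem : y ∈ Γ' := hΓ'_symm σ.symm x hx
    have h1 : ∑ i, γ₂ i * (x i - (0 : EuclideanSpace ℝ (Fin m)) i) = ∑ i, γ₁ (σ i) * y (σ i) := by
      refine Finset.sum_congr rfl fun i _ => ?_
      have hyx : y (σ i) = x i := congrArg x (Equiv.symm_apply_apply σ i)
      rw [hyx]
      simp [hγ₂]
    have h2 : ∑ i, (γ₁ (σ i)) * y (σ i) = ∑ i, γ₁ i * y i :=
      Equiv.sum_comp σ (fun i => γ₁ i * y i)
    rw [h1, h2]
    exact hγ₁pos y hy_mem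
  have h0_mono : Monotone (fun i => (0 : EuclideanSpace ℝ (Fin m)) i) := by
    intro a b _; simp
  -- the rearranged dot product is smaller
  have hγ₂l_le : ∑ i, γ₂ i * l i ≤ ∑ i, γ₁ i * l i := by
    have hanti : Antivary (fun i => γ₂ i) (fun i => l i) := by
      intro i j hij
      have hij' : i < j := by
        by_contra h
        push_neg at h
        exact absurd (hl_asc h) (not_le.mpr hij)
      exact hγ₂_anti hij'.le
    have h1 := hanti.sum_mul_le_sum_comp_perm_mul (σ := σ.symm)
    have h2 : ∑ i, γ₂ (σ.symm i) * l i = ∑ i, γ₁ i * l i := by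
      refine Finset.sum_congr rfl fun i _ => ?_
      have : γ₂ (Equiv.symm σ i) = γ₁ i := congrArg γ₁ (Equiv.apply_symm_apply σ i)
      rw [this]
    rw [h2] at h1
    exact h1
  set r₀ : ℝ := ∑ i, γ₂ i * l i with hr₀
  have hr₀_mem : r₀ ∈ S :=
    ⟨0, γ₂, h0front, h0_mono, hγ₂_norm, hγ₂_pos, hγ₂_anti, rfl⟩
  have hS_ne : S.Nonempty := ⟨r₀, hr₀_mem⟩
  have hS_bdd : BddBelow S := by
    refine ⟨0, fun r hr => ?_⟩
    obtain ⟨l₀, γ, hl₀f, _, _, hγsep, _, hrEq⟩ := hr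
    obtain ⟨_, hpos⟩ := pair_facts Γ' hΓ'_cone hl hl₀f hγsep
    rw [hrEq]
    exact (hpos l hl).le
  apply le_antisymm
  · -- infDist ≤ sInf : infDist is a lower bound of S
    refine le_csInf hS_ne fun r hr => ?_
    obtain ⟨l₀, γ, hl₀f, _, hγnorm, hγsep, _, hrEq⟩ := hr
    obtain ⟨hγl₀, hγpos⟩ := pair_facts Γ' hΓ'_cone hl hl₀f hγsep
    set c : ℝ := ∑ i, γ i * l i with hcdef
    set p : EuclideanSpace ℝ (Fin m) := l - c • γ with hp
    have hγp : ∑ i, γ i * p i = 0 := by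
      have h1 : ∑ i, γ i * p i = (∑ i, γ i * l i) - c * ∑ i, γ i * γ i := by
        rw [Finset.mul_sum, ← Finset.sum_sub_distrib]
        refine Finset.sum_congr rfl fun i _ => ?_
        simp [hp, PiLp.sub_apply, PiLp.smul_apply, smul_eq_mul]
        ring
      rw [h1, es_sum_sq_of_norm_one γ hγnorm, mul_one, ← hcdef, sub_self]
    have hp_notin : p ∉ Γ' := fun hmem => by
      have := hγpos p hmem
      rw [hγp] at this
      exact lt_irrefl _ this
    obtain ⟨y, hy_front, hy_dist⟩ :=
      exists_mem_frontier_infDist_compl_eq_dist hl hΓ'_ne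
    have h1 : Metric.infDist l (frontier Γ') ≤ dist l y :=
      Metric.infDist_le_dist_of_mem hy_front
    have h2 : Metric.infDist l Γ'ᶜ ≤ dist l p :=
      Metric.infDist_le_dist_of_mem hp_notin
    have h3 : dist l p = |c| := by
      rw [hp, dist_eq_norm]
      simp [norm_smul, hγnorm, Real.norm_eq_abs]
    have hc_pos : 0 < c := hγpos l hl
    rw [hrEq]
    calc Metric.infDist l (frontier Γ') ≤ dist l y := h1
      _ = Metric.infDist l Γ'ᶜ := hy_dist.symm
      _ ≤ dist l p := h2
      _ = c := by rw [h3, abs_of_pos hc_pos]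
  · -- sInf ≤ infDist
    exact csInf_le_of_le hS_bdd hr₀_mem (le_trans hγ₂l_le hγ₁l_le)
end

section
/- If lim_{s→+∞} f(λ_1,…,λ_{n−1},s) = +∞ for one point (λ_1,…,λ_{n−1}) ∈ Γ', then lim_{s→+∞} f(μ_1,…,μ_{n−1},s) = +∞ for every (μ_1,…,μ_{n−1}) ∈ Γ'. -/
open Real Set Filter

/-- If lim_{s→∞} f(λ', s) = +∞ for one point λ' ∈ Γ', then
lim_{s→∞} f(μ', s) = +∞ for every μ' ∈ Γ'. -/
theorem unbounded_at_one_point_implies_everywhere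
    {m : ℕ} (hm : 1 ≤ m)
    (Γ : Set (EuclideanSpace ℝ (Fin (m + 1))))
    (hΓ_open : IsOpen Γ)
    (hΓ_convex : Convex ℝ Γ)
    (hΓ_cone : ∀ s : ℝ, 0 < s → ∀ x ∈ Γ, s • x ∈ Γ)
    (hΓ_symm : ∀ σ : Equiv.Perm (Fin (m + 1)), ∀ x ∈ Γ, WithLp.toLp 2 (fun i => x (σ i)) ∈ Γ)
    (hΓn : {x : EuclideanSpace ℝ (Fin (m + 1)) | ∀ i, 0 < x i} ⊆ Γ)
    (hΓ1 : Γ ⊆ {x : EuclideanSpace ℝ (Fin (m + 1)) | 0 < ∑ i, x i})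
    (f : EuclideanSpace ℝ (Fin (m + 1)) → ℝ)
    (hf1_pos : ∀ x ∈ Γ, 0 < f x)
    (hf3 : ConcaveOn ℝ Γ f)
    (l : Fin m → ℝ) (hl : ∃ s₀ : ℝ, WithLp.toLp 2 (Fin.snoc l s₀ : Fin (m + 1) → ℝ) ∈ Γ)
    (hlim : Tendsto (fun s : ℝ => f (WithLp.toLp 2 (Fin.snoc l s : Fin (m + 1) → ℝ))) atTop atTop) :
    ∀ μ : Fin m → ℝ, (∃ s₀ : ℝ, WithLp.toLp 2 (Fin.snoc μ s₀ : Fin (m + 1) → ℝ) ∈ Γ) →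
      Tendsto (fun s : ℝ => f (WithLp.toLp 2 (Fin.snoc μ s : Fin (m + 1) → ℝ))) atTop atTop := by
  intro μ hμ'
  obtain ⟨s₁, hμ⟩ := hμ'
  obtain ⟨s₀, hlam⟩ := hl
  -- Γ is closed under addition
  have hadd : ∀ x ∈ Γ, ∀ y ∈ Γ, x + y ∈ Γ := by
    intro x hx y hy
    have h := hΓ_convex hx hy (by norm_num : (0:ℝ) ≤ 1/2)
      (by norm_num : (0:ℝ) ≤ 1/2) (by norm_num)
    have h2 := hΓ_cone 2 (by norm_num) _ h
    have : (2:ℝ) • ((1/2:ℝ) • x + (1/2:ℝ) • y) = x + y := by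
      rw [smul_add, smul_smul, smul_smul]; norm_num
    rwa [this] at h2
  -- increasing the last coordinate keeps a point in Γ
  have hsnoc : ∀ (v : Fin m → ℝ) (a b : ℝ), a ≤ b →
      WithLp.toLp 2 (Fin.snoc v a : Fin (m+1) → ℝ) ∈ Γ → WithLp.toLp 2 (Fin.snoc v b : Fin (m+1) → ℝ) ∈ Γ := by
    intro v a b hab hv
    rcases eq_or_lt_of_le hab with rfl | h
    · exact hv
    set w : EuclideanSpace ℝ (Fin (m+1)) := WithLp.toLp 2 (Fin.snoc (fun _ => (1:ℝ)) 0 : Fin (m+1) → ℝ) with hw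
    set y : EuclideanSpace ℝ (Fin (m+1)) := WithLp.toLp 2 (Fin.snoc v a : Fin (m+1) → ℝ) with hy
    have hcont : Continuous fun ε : ℝ => y - ε • w :=
      continuous_const.sub (continuous_id.smul continuous_const)
    have hopen : IsOpen {ε : ℝ | y - ε • w ∈ Γ} := hΓ_open.preimage hcont
    have h0 : (0:ℝ) ∈ {ε : ℝ | y - ε • w ∈ Γ} := by
      simp only [Set.mem_setOf_eq, zero_smul, sub_zero]; exact hv
    obtain ⟨δ, hδpos, hball⟩ := Metric.isOpen_iff.mp hopen 0 h0
    have hε : y - (δ/2) • w ∈ Γ := by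
      apply hball
      rw [Metric.mem_ball, Real.dist_eq, sub_zero, abs_of_pos (by linarith : (0:ℝ) < δ/2)]
      linarith
    set p : EuclideanSpace ℝ (Fin (m+1)) :=
      WithLp.toLp 2 (fun i : Fin (m+1) => (δ/2) * w i + (if i = Fin.last m then b - a else 0)) with hpdef
    have hp : p ∈ Γ := by
      apply hΓn
      intro i
      simp only [hpdef, Set.mem_setOf_eq, PiLp.toLp_apply]
      rcases eq_or_ne i (Fin.last m) with rfl | hne
      · simp [hw, Fin.snoc_last]; linarith
      · obtain ⟨j, rfl⟩ := Fin.exists_castSucc_eq.2 hne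
        simp [hw, Fin.snoc_castSucc, if_neg hne]
        linarith
    have := hadd _ hε _ hp
    have heq : (y - (δ/2) • w) + p = WithLp.toLp 2 (Fin.snoc v b : Fin (m+1) → ℝ) := by
      ext i
      show y i - (δ/2) * w i + ((δ/2) * w i + (if i = Fin.last m then b - a else 0)) = _
      rcases eq_or_ne i (Fin.last m) with rfl | hne
      · simp [hy, hw, Fin.snoc_last]
      · obtain ⟨j, rfl⟩ := Fin.exists_castSucc_eq.2 hne
        simp [hy, hw, Fin.snoc_castSucc, if_neg hne]
    rwa [heq] at this
  -- choose t ∈ (0,1) with (μ,s₁) - (1-t)•(λ,s₀) ∈ Γ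
  set yμ : EuclideanSpace ℝ (Fin (m+1)) := WithLp.toLp 2 (Fin.snoc μ s₁ : Fin (m+1) → ℝ) with hyμ
  set ylam : EuclideanSpace ℝ (Fin (m+1)) := WithLp.toLp 2 (Fin.snoc l s₀ : Fin (m+1) → ℝ) with hylam
  have hcont : Continuous fun t : ℝ => yμ - (1 - t) • ylam :=
    continuous_const.sub ((continuous_const.sub continuous_id).smul continuous_const)
  have hopen : IsOpen {t : ℝ | yμ - (1 - t) • ylam ∈ Γ} := hΓ_open.preimage hcont
  have h1 : (1:ℝ) ∈ {t : ℝ | yμ - (1 - t) • ylam ∈ Γ} := by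
    simp only [Set.mem_setOf_eq, sub_self, zero_smul, sub_zero]; exact hμ
  obtain ⟨δ, hδpos, hball⟩ := Metric.isOpen_iff.mp hopen 1 h1
  set t : ℝ := 1 - min δ 1 / 2 with ht
  have hmin : 0 < min δ 1 := lt_min hδpos one_pos
  have hmin1 : min δ 1 ≤ 1 := min_le_right _ _
  have ht0 : 0 < t := by simp only [ht]; linarith
  have ht1 : t < 1 := by simp only [ht]; linarith
  have htΓ : yμ - (1 - t) • ylam ∈ Γ := by
    apply hball
    rw [Metric.mem_ball, Real.dist_eq, ht]
    rw [abs_of_nonpos (by linarith)]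
    linarith [min_le_left δ 1]
  set w : EuclideanSpace ℝ (Fin (m+1)) := t⁻¹ • (yμ - (1 - t) • ylam) with hwdef
  have hwΓ : w ∈ Γ := hΓ_cone t⁻¹ (by positivity) _ htΓ
  set C : ℝ := s₁ - (1 - t) * s₀ with hC
  set u : ℝ → ℝ := fun s => (s - C) / (1 - t) with hu
  -- key decomposition
  have hkey : ∀ s : ℝ, s₁ ≤ s → ∀ z zμ : EuclideanSpace ℝ (Fin (m+1)),
      z = WithLp.toLp 2 (Fin.snoc l (u s) : Fin (m+1) → ℝ) → zμ = WithLp.toLp 2 (Fin.snoc μ s : Fin (m+1) → ℝ) →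
      zμ = (1 - t) • z + t • w := by
    intro s hs z zμ hz hzμ
    subst hz; subst hzμ
    ext i
    show _ = (1 - t) * (Fin.snoc l (u s) : Fin (m+1) → ℝ) i + t * (t⁻¹ * (yμ i - (1 - t) * ylam i))
    have htne : t ≠ 0 := ne_of_gt ht0
    have h1tne : (1:ℝ) - t ≠ 0 := by linarith
    rcases eq_or_ne i (Fin.last m) with rfl | hne
    · simp only [hyμ, hylam, PiLp.toLp_apply, Fin.snoc_last, hu, hC]
      field_simp
      ring
    · obtain ⟨j, rfl⟩ := Fin.exists_castSucc_eq.2 hne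
      simp only [hyμ, hylam, PiLp.toLp_apply, Fin.snoc_castSucc]
      field_simp
      ring
  -- u tends to atTop
  have huT : Tendsto u atTop atTop := by
    have h1tpos : (0:ℝ) < 1 - t := by linarith
    have : Tendsto (fun s : ℝ => s - C) atTop atTop :=
      tendsto_atTop_add_const_right atTop (-C) tendsto_id
    exact this.atTop_div_const h1tpos
  have husΓ : ∀ᶠ s in atTop, WithLp.toLp 2 (Fin.snoc l (u s) : Fin (m+1) → ℝ) ∈ Γ := by
    filter_upwards [huT.eventually_ge_atTop s₀] with s hs
    exact hsnoc l s₀ (u s) hs hlam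
  -- main inequality, eventually
  have hineq : ∀ᶠ s in atTop, (1 - t) * f (WithLp.toLp 2 (Fin.snoc l (u s) : Fin (m+1) → ℝ)) ≤ f (WithLp.toLp 2 (Fin.snoc μ s : Fin (m+1) → ℝ)) := by
    filter_upwards [husΓ, eventually_ge_atTop s₁] with s hsΓ hs
    have hconc := hf3.2 hsΓ hwΓ (by linarith : (0:ℝ) ≤ 1 - t) (le_of_lt ht0) (by ring)
    rw [← hkey s hs _ _ rfl rfl] at hconc
    have hwpos : 0 < f w := hf1_pos w hwΓ
    have : 0 < t * f w := by positivity
    simp only [smul_eq_mul] at hconc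
    linarith
  have hmain : Tendsto (fun s : ℝ => (1 - t) * f (WithLp.toLp 2 (Fin.snoc l (u s) : Fin (m+1) → ℝ))) atTop atTop := by
    have := hlim.comp huT
    exact this.const_mul_atTop (by linarith : (0:ℝ) < 1 - t)
  exact tendsto_atTop_mono' atTop hineq hmain
end

section
/- Suppose f is of bounded type. Then for every λ' = (λ_1,…,λ_{n−1}) ∈ Γ' the limit f_∞(λ') := lim_{s→+∞} f(λ_1,…,λ_{n−1},s) exists and is finite, and the function f_∞ : Γ' → ℝ is homogeneous of degree one, nondecreasing in each variable λ_i (1 ≤ i ≤ n−1), concave in Γ', and continuous in Γ'. -/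
open Real Set Filter

/-- The projection Γ' of Γ onto the first m coordinates: λ' ∈ Γ' iff (λ', s) ∈ Γ for some s. -/
def projCone {m : ℕ} (Γ : Set (EuclideanSpace ℝ (Fin (m + 1)))) : Set (Fin m → ℝ) :=
  {l | ∃ s : ℝ, WithLp.toLp 2 (Fin.snoc l s : Fin (m + 1) → ℝ) ∈ Γ}

lemma snoc_combo {m : ℕ} (a b : ℝ) (l μ : Fin m → ℝ) (s t : ℝ) :
    a • WithLp.toLp 2 (Fin.snoc l s : Fin (m+1) → ℝ) + b • WithLp.toLp 2 (Fin.snoc μ t : Fin (m+1) → ℝ)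
      = WithLp.toLp 2 (Fin.snoc (a • l + b • μ) (a * s + b * t) : Fin (m+1) → ℝ) := by
  ext i
  refine Fin.lastCases ?_ (fun j => ?_) i <;>
    simp [PiLp.add_apply, PiLp.smul_apply, Fin.snoc_last, Fin.snoc_castSucc]

lemma snoc_smul {m : ℕ} (c : ℝ) (l : Fin m → ℝ) (s : ℝ) :
    c • WithLp.toLp 2 (Fin.snoc l s : Fin (m+1) → ℝ)
      = WithLp.toLp 2 (Fin.snoc (c • l) (c * s) : Fin (m+1) → ℝ) := by
  ext i
  refine Fin.lastCases ?_ (fun j => ?_) i <;>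
    simp [PiLp.smul_apply, Fin.snoc_last, Fin.snoc_castSucc]

lemma snoc_add {m : ℕ} (l μ : Fin m → ℝ) (s t : ℝ) :
    WithLp.toLp 2 (Fin.snoc l s : Fin (m+1) → ℝ) + WithLp.toLp 2 (Fin.snoc μ t : Fin (m+1) → ℝ)
      = WithLp.toLp 2 (Fin.snoc (l + μ) (s + t) : Fin (m+1) → ℝ) := by
  ext i
  refine Fin.lastCases ?_ (fun j => ?_) i <;>
    simp [PiLp.add_apply, Fin.snoc_last, Fin.snoc_castSucc]

lemma tendsto_sSup_of_mono (S : Set ℝ) (g : ℝ → ℝ) (hne : S.Nonempty)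
    (hup : ∀ s ∈ S, ∀ t, s ≤ t → t ∈ S)
    (hmono : ∀ s ∈ S, ∀ t ∈ S, s ≤ t → g s ≤ g t)
    (hbdd : BddAbove (g '' S)) :
    Tendsto g atTop (nhds (sSup (g '' S))) := by
  obtain ⟨s₀, hs₀⟩ := hne
  rw [tendsto_order]
  constructor
  · intro b hb
    obtain ⟨y, ⟨s₁, hs₁, rfl⟩, hy⟩ := exists_lt_of_lt_csSup (Set.Nonempty.image g ⟨s₀, hs₀⟩) hb
    filter_upwards [eventually_ge_atTop s₁] with u hu
    exact lt_of_lt_of_le hy (hmono s₁ hs₁ u (hup s₁ hs₁ u hu) hu)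
  · intro b hb
    filter_upwards [eventually_ge_atTop s₀] with u hu
    exact lt_of_le_of_lt (le_csSup hbdd ⟨u, hup s₀ hs₀ u hu, rfl⟩) hb

lemma tendsto_atTop_of_unbdd (S : Set ℝ) (g : ℝ → ℝ)
    (hup : ∀ s ∈ S, ∀ t, s ≤ t → t ∈ S)
    (hmono : ∀ s ∈ S, ∀ t ∈ S, s ≤ t → g s ≤ g t)
    (hnb : ¬ BddAbove (g '' S)) :
    Tendsto g atTop atTop := by
  rw [tendsto_atTop]
  intro b
  obtain ⟨y, ⟨s₁, hs₁, rfl⟩, hy⟩ := not_bddAbove_iff.1 hnb b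
  filter_upwards [eventually_ge_atTop s₁] with u hu
  exact hy.le.trans (hmono s₁ hs₁ u (hup s₁ hs₁ u hu) hu)

/-- If f is of bounded type, then for every λ' ∈ Γ' the limit
f_∞(λ') := lim_{s→∞} f(λ', s) exists and is finite, and f_∞ is homogeneous of degree one,
nondecreasing in each variable, concave in Γ', and continuous in Γ'. -/
theorem bounded_type_limit_function
    {m : ℕ} (hm : 1 ≤ m)
    (Γ : Set (EuclideanSpace ℝ (Fin (m + 1))))
    (hΓ_open : IsOpen Γ)
    (hΓ_convex : Convex ℝ Γ)
    (hΓ_cone : ∀ s : ℝ, 0 < s → ∀ x ∈ Γ, s • x ∈ Γ)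
    (hΓ_symm : ∀ σ : Equiv.Perm (Fin (m + 1)), ∀ x ∈ Γ, WithLp.toLp 2 (fun i => x (σ i)) ∈ Γ)
    (hΓn : {x : EuclideanSpace ℝ (Fin (m + 1)) | ∀ i, 0 < x i} ⊆ Γ)
    (hΓ1 : Γ ⊆ {x : EuclideanSpace ℝ (Fin (m + 1)) | 0 < ∑ i, x i})
    (f : EuclideanSpace ℝ (Fin (m + 1)) → ℝ)
    (hf_smooth : ContDiffOn ℝ (⊤ : ℕ∞) f Γ)
    (hf_cont : ContinuousOn f (closure Γ))
    (hf_symm : ∀ σ : Equiv.Perm (Fin (m + 1)), ∀ x ∈ Γ, f (WithLp.toLp 2 (fun i => x (σ i))) = f x)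
    (hf1_pos : ∀ x ∈ Γ, 0 < f x)
    (hf1_bd : ∀ x ∈ frontier Γ, f x = 0)
    (hf2 : ∀ x ∈ Γ, ∀ i, 0 < fderiv ℝ f x (EuclideanSpace.single i 1))
    (hf3 : ConcaveOn ℝ Γ f)
    (hf4 : ∀ s : ℝ, 0 < s → ∀ x ∈ Γ, f (s • x) = s * f x)
    (hf_bounded : ∃ l ∈ projCone Γ,
      ¬ Tendsto (fun s : ℝ => f (WithLp.toLp 2 (Fin.snoc l s : Fin (m + 1) → ℝ))) atTop atTop) :
    ∃ finf : (Fin m → ℝ) → ℝ,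
      (∀ l ∈ projCone Γ,
        Tendsto (fun s : ℝ => f (WithLp.toLp 2 (Fin.snoc l s : Fin (m + 1) → ℝ))) atTop (nhds (finf l))) ∧
      (∀ c : ℝ, 0 < c → ∀ l ∈ projCone Γ, finf (c • l) = c * finf l) ∧
      (∀ l ∈ projCone Γ, ∀ μ ∈ projCone Γ, (∀ i, l i ≤ μ i) → finf l ≤ finf μ) ∧
      ConcaveOn ℝ (projCone Γ) finf ∧
      ContinuousOn finf (projCone Γ) := by
  classical
  -- Γ + Γ ⊆ Γ
  have hadd : ∀ x ∈ Γ, ∀ y ∈ Γ, x + y ∈ Γ := by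
    intro x hx y hy
    have h1 : (1/2 : ℝ) • x + (1/2 : ℝ) • y ∈ Γ :=
      hΓ_convex hx hy (by norm_num) (by norm_num) (by norm_num)
    have h2 := hΓ_cone 2 (by norm_num) _ h1
    have h3 : (2:ℝ) • ((1/2 : ℝ) • x + (1/2 : ℝ) • y) = x + y := by
      rw [smul_add, smul_smul, smul_smul]; norm_num
    rwa [h3] at h2
  obtain ⟨one, hone⟩ : ∃ v : EuclideanSpace ℝ (Fin (m+1)), ∀ i, v i = 1 :=
    ⟨WithLp.toLp 2 (fun _ => 1), fun _ => rfl⟩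
  -- Γ is upward closed
  have hΓ_up : ∀ x ∈ Γ, ∀ d : EuclideanSpace ℝ (Fin (m+1)), (∀ i, 0 ≤ d i) → x + d ∈ Γ := by
    intro x hx d hd
    have hcont : Continuous fun t : ℝ => x - t • one := by
      exact continuous_const.sub (continuous_id.smul continuous_const)
    have hopen : IsOpen {t : ℝ | x - t • one ∈ Γ} :=
      hΓ_open.preimage hcont
    have h0 : (0:ℝ) ∈ {t : ℝ | x - t • one ∈ Γ} := by
      simp only [Set.mem_setOf_eq, zero_smul, sub_zero]; exact hx
    obtain ⟨ε, hε, hball⟩ := Metric.isOpen_iff.1 hopen 0 h0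
    set t : ℝ := ε/2 with htdef
    have ht : 0 < t := by positivity
    have hxt : x - t • one ∈ Γ := by
      apply hball
      simp only [Metric.mem_ball, Real.dist_eq, sub_zero]
      rw [abs_of_pos ht]; linarith
    have h2 : (t • one + d) ∈ Γ := by
      apply hΓn
      intro i
      have : (t • one + d) i = t * 1 + d i := by
        simp [PiLp.add_apply, PiLp.smul_apply, hone]
      rw [this]
      have := hd i; linarith
    have := hadd _ hxt _ h2
    have heq : x - t • one
        + (t • one + d) = x + d := by abel
    rwa [heq] at this
  -- f superadditive
  have hsuper : ∀ x ∈ Γ, ∀ y ∈ Γ, f x + f y ≤ f (x + y) := by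
    intro x hx y hy
    have h1 : (1/2 : ℝ) • x + (1/2 : ℝ) • y ∈ Γ :=
      hΓ_convex hx hy (by norm_num) (by norm_num) (by norm_num)
    have h2 := hf3.2 hx hy (by norm_num : (0:ℝ) ≤ 1/2) (by norm_num : (0:ℝ) ≤ 1/2) (by norm_num)
    have h3 := hf4 2 (by norm_num) _ h1
    have h4 : (2:ℝ) • ((1/2 : ℝ) • x + (1/2 : ℝ) • y) = x + y := by
      rw [smul_add, smul_smul, smul_smul]; norm_num
    rw [h4] at h3
    rw [h3]
    simp only [smul_eq_mul] at h2
    linarith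
  -- f continuous at points of Γ
  have hf_ca : ∀ x ∈ Γ, ContinuousAt f x := by
    intro x hx
    exact hf_cont.continuousAt (Filter.mem_of_superset (hΓ_open.mem_nhds hx) subset_closure)
  -- f monotone
  have hf_mono : ∀ x ∈ Γ, ∀ d : EuclideanSpace ℝ (Fin (m+1)), (∀ i, 0 ≤ d i) → f x ≤ f (x + d) := by
    intro x hx d hd
    have hxd : x + d ∈ Γ := hΓ_up x hx d hd
    have hca : ContinuousAt (fun t : ℝ => f (x + d + t • one)) 0 := by
      apply ContinuousAt.comp
      · simpa using hf_ca _ hxd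
      · exact (continuous_const.add (continuous_id.smul continuous_const)).continuousAt
    have hev : ∀ t : ℝ, 0 < t → f x ≤ f (x + d + t • one) := by
      intro t ht
      have h1 : (d + t • one) ∈ Γ := by
        apply hΓn
        intro i
        have : (d + t • one) i = d i + t * 1 := by
          simp [PiLp.add_apply, PiLp.smul_apply, hone]
        rw [this]
        have := hd i; linarith
      have h2 := hsuper x hx _ h1
      have h3 := hf1_pos _ h1
      have h4 : x + (d + t • one)
          = x + d + t • one := by abel
      rw [h4] at h2
      linarith
    have hlim : Tendsto (fun t : ℝ => f (x + d + t • one))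
        (nhdsWithin 0 (Ioi 0)) (nhds (f (x + d))) := by
      have h := hca.tendsto.mono_left (nhdsWithin_le_nhds (s := Ioi (0:ℝ)))
      simpa using h
    exact ge_of_tendsto hlim (eventually_mem_nhdsWithin.mono fun t ht => hev t ht)
  -- the section sets
  set S : (Fin m → ℝ) → Set ℝ := fun l => {s : ℝ | WithLp.toLp 2 (Fin.snoc l s : Fin (m + 1) → ℝ) ∈ Γ} with hSdef
  -- upward closedness of S l
  have hS_up : ∀ l : Fin m → ℝ, ∀ s ∈ S l, ∀ t, s ≤ t → t ∈ S l := by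
    intro l s hs t hst
    have hd : ∀ i, 0 ≤ (Fin.snoc (0 : Fin m → ℝ) (t - s) : Fin (m+1) → ℝ) i := by
      intro i
      refine Fin.lastCases ?_ (fun j => ?_) i
      · simp only [Fin.snoc_last]; linarith
      · simp only [Fin.snoc_castSucc, Pi.zero_apply]; exact le_refl 0
    have hmem := hΓ_up _ hs (WithLp.toLp 2 (Fin.snoc (0 : Fin m → ℝ) (t - s) : Fin (m+1) → ℝ)) hd
    have heq : WithLp.toLp 2 (Fin.snoc l s : Fin (m+1) → ℝ)
        + WithLp.toLp 2 (Fin.snoc (0 : Fin m → ℝ) (t - s) : Fin (m+1) → ℝ)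
        = WithLp.toLp 2 (Fin.snoc l t : Fin (m+1) → ℝ) := by
      rw [snoc_add]; simp
    rw [heq] at hmem
    exact hmem
  -- monotonicity of g l on S l
  have hS_mono : ∀ l : Fin m → ℝ, ∀ s ∈ S l, ∀ t ∈ S l, s ≤ t →
      f (WithLp.toLp 2 (Fin.snoc l s : Fin (m+1) → ℝ)) ≤ f (WithLp.toLp 2 (Fin.snoc l t : Fin (m+1) → ℝ)) := by
    intro l s hs t ht hst
    have hd : ∀ i, 0 ≤ (Fin.snoc (0 : Fin m → ℝ) (t - s) : Fin (m+1) → ℝ) i := by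
      intro i
      refine Fin.lastCases ?_ (fun j => ?_) i
      · simp only [Fin.snoc_last]; linarith
      · simp only [Fin.snoc_castSucc, Pi.zero_apply]; exact le_refl 0
    have hmono := hf_mono _ hs (WithLp.toLp 2 (Fin.snoc (0 : Fin m → ℝ) (t - s) : Fin (m+1) → ℝ)) hd
    have heq : WithLp.toLp 2 (Fin.snoc l s : Fin (m+1) → ℝ)
        + WithLp.toLp 2 (Fin.snoc (0 : Fin m → ℝ) (t - s) : Fin (m+1) → ℝ)
        = WithLp.toLp 2 (Fin.snoc l t : Fin (m+1) → ℝ) := by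
      rw [snoc_add]; simp
    rw [heq] at hmono
    exact hmono
  -- S l eventually, for l in projCone
  have hS_ev : ∀ l ∈ projCone Γ, ∀ᶠ s in atTop, s ∈ S l := by
    rintro l ⟨s₀, hs₀⟩
    filter_upwards [eventually_ge_atTop s₀] with s hs
    exact hS_up l s₀ hs₀ s hs
  -- projCone is open
  have hproj_open : IsOpen (projCone Γ) := by
    rw [isOpen_iff_mem_nhds]
    rintro l ⟨s, hs⟩
    have hcont : Continuous fun l' : Fin m → ℝ => WithLp.toLp 2 (Fin.snoc l' s : Fin (m+1) → ℝ) := by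
      have : Continuous fun l' : Fin m → ℝ => (Fin.snoc l' s : Fin (m+1) → ℝ) := by
        apply continuous_pi
        intro i
        refine Fin.lastCases ?_ (fun j => ?_) i
        · simp only [Fin.snoc_last]; exact continuous_const
        · simp only [Fin.snoc_castSucc]; exact continuous_apply j
      exact (PiLp.continuous_toLp 2 _).comp this
    have hmem : {l' : Fin m → ℝ | WithLp.toLp 2 (Fin.snoc l' s : Fin (m+1) → ℝ) ∈ Γ} ∈ nhds l :=
      (hΓ_open.preimage hcont).mem_nhds hs
    exact Filter.mem_of_superset hmem (fun l' hl' => ⟨s, hl'⟩)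
  -- projCone is convex
  have hproj_convex : Convex ℝ (projCone Γ) := by
    rintro l ⟨s, hs⟩ μ ⟨t, ht⟩ a b ha hb hab
    refine ⟨a * s + b * t, ?_⟩
    have := hΓ_convex hs ht ha hb hab
    rwa [snoc_combo] at this
  -- bounded witness
  obtain ⟨l₀, hl₀, hnt⟩ := hf_bounded
  have hbd₀ : BddAbove ((fun s => f (WithLp.toLp 2 (Fin.snoc l₀ s : Fin (m+1) → ℝ))) '' (S l₀)) := by
    by_contra h
    exact hnt (tendsto_atTop_of_unbdd (S l₀) _ (hS_up l₀) (hS_mono l₀) h)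
  obtain ⟨M₀, hM₀⟩ := hbd₀
  -- boundedness for every l
  have hbd : ∀ l ∈ projCone Γ, BddAbove ((fun s => f (WithLp.toLp 2 (Fin.snoc l s : Fin (m+1) → ℝ))) '' (S l)) := by
    intro l hl
    -- find t ∈ (0,1) with (1-t)⁻¹ • (l₀ - t • l) ∈ projCone Γ
    have hca : ContinuousAt (fun t : ℝ => (1-t)⁻¹ • (l₀ - t • l)) 0 := by
      have h1 : ContinuousAt (fun t : ℝ => (1-t)⁻¹) 0 := by
        apply ContinuousAt.inv₀
        · exact (continuous_const.sub continuous_id).continuousAt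
        · norm_num
      exact h1.smul ((continuous_const.sub (continuous_id.smul continuous_const)).continuousAt)
    have h00 : (fun t : ℝ => (1-t)⁻¹ • (l₀ - t • l)) 0 ∈ projCone Γ := by
      simpa using hl₀
    have hnb : {t : ℝ | (1-t)⁻¹ • (l₀ - t • l) ∈ projCone Γ} ∈ nhds (0:ℝ) :=
      hca.preimage_mem_nhds (hproj_open.mem_nhds h00)
    obtain ⟨δ, hδ, hball⟩ := Metric.mem_nhds_iff.1 hnb
    set t : ℝ := min (δ/2) (1/2) with htdef
    have ht0 : 0 < t := by positivity
    have ht1 : t < 1 := lt_of_le_of_lt (min_le_right _ _) (by norm_num)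
    have h1t : (0:ℝ) < 1 - t := by linarith
    have htball : t ∈ Metric.ball (0:ℝ) δ := by
      simp only [Metric.mem_ball, Real.dist_eq, sub_zero]
      rw [abs_of_pos ht0]
      exact lt_of_le_of_lt (min_le_left _ _) (by linarith)
    have hx' : (1-t)⁻¹ • (l₀ - t • l) ∈ projCone Γ := hball htball
    set x' : Fin m → ℝ := (1-t)⁻¹ • (l₀ - t • l) with hx'def
    obtain ⟨sx, hsx⟩ := hx'
    have hcombo : t • l + (1-t) • x' = l₀ := by
      rw [hx'def, smul_smul, mul_inv_cancel₀ h1t.ne', one_smul]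
      abel
    refine ⟨M₀ / t, ?_⟩
    rintro y ⟨s, hsS, rfl⟩
    have hmem : t • WithLp.toLp 2 (Fin.snoc l s : Fin (m+1) → ℝ)
        + (1-t) • WithLp.toLp 2 (Fin.snoc x' sx : Fin (m+1) → ℝ) ∈ Γ :=
      hΓ_convex hsS hsx ht0.le h1t.le (by ring)
    have heq : t • WithLp.toLp 2 (Fin.snoc l s : Fin (m+1) → ℝ)
        + (1-t) • WithLp.toLp 2 (Fin.snoc x' sx : Fin (m+1) → ℝ)
        = WithLp.toLp 2 (Fin.snoc l₀ (t * s + (1-t) * sx) : Fin (m+1) → ℝ) := by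
      rw [snoc_combo, hcombo]
    have hconc := hf3.2 hsS hsx ht0.le h1t.le (by ring : t + (1-t) = 1)
    rw [heq] at hconc
    have hMbd : f (WithLp.toLp 2 (Fin.snoc l₀ (t * s + (1-t) * sx) : Fin (m+1) → ℝ)) ≤ M₀ := by
      apply hM₀
      refine ⟨t * s + (1-t) * sx, ?_, rfl⟩
      rw [heq] at hmem
      exact hmem
    have hxpos : 0 < f (WithLp.toLp 2 (Fin.snoc x' sx : Fin (m+1) → ℝ)) := hf1_pos _ hsx
    simp only [smul_eq_mul] at hconc
    rw [le_div_iff₀ ht0, mul_comm]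
    nlinarith
  -- define the limit function
  set finf : (Fin m → ℝ) → ℝ :=
    fun l => sSup ((fun s => f (WithLp.toLp 2 (Fin.snoc l s : Fin (m+1) → ℝ))) '' (S l)) with hfinfdef
  have hlim : ∀ l ∈ projCone Γ,
      Tendsto (fun s : ℝ => f (WithLp.toLp 2 (Fin.snoc l s : Fin (m+1) → ℝ))) atTop (nhds (finf l)) := by
    intro l hl
    exact tendsto_sSup_of_mono (S l) _ hl (hS_up l) (hS_mono l) (hbd l hl)
  refine ⟨finf, hlim, ?_, ?_, ?_, ?_⟩
  · -- homogeneity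
    intro c hc l hl
    obtain ⟨s₀, hs₀⟩ := hl
    have hcl : c • l ∈ projCone Γ := by
      refine ⟨c * s₀, ?_⟩
      have := hΓ_cone c hc _ hs₀
      rwa [snoc_smul] at this
    have h1 := hlim (c • l) hcl
    have h2 : Tendsto (fun s : ℝ => f (WithLp.toLp 2 (Fin.snoc (c • l) s : Fin (m+1) → ℝ))) atTop (nhds (c * finf l)) := by
      have h3 : Tendsto (fun s : ℝ => c * f (WithLp.toLp 2 (Fin.snoc l (s / c) : Fin (m+1) → ℝ))) atTop (nhds (c * finf l)) := by
        have hdiv : Tendsto (fun s : ℝ => s / c) atTop atTop :=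
          Tendsto.atTop_div_const hc tendsto_id
        exact ((hlim l ⟨s₀, hs₀⟩).comp hdiv).const_mul c
      refine Tendsto.congr' ?_ h3
      have hev : ∀ᶠ s : ℝ in atTop, s / c ∈ S l := by
        filter_upwards [eventually_ge_atTop (c * s₀)] with s hs
        have : s₀ ≤ s / c := by
          rw [le_div_iff₀ hc]; linarith [hs]
        exact hS_up l s₀ hs₀ _ this
      filter_upwards [hev] with s hs
      have heq : WithLp.toLp 2 (Fin.snoc (c • l) s : Fin (m+1) → ℝ)
          = c • WithLp.toLp 2 (Fin.snoc l (s / c) : Fin (m+1) → ℝ) := by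
        have hcs : c * (s / c) = s := by field_simp
        rw [snoc_smul, hcs]
      rw [heq, hf4 c hc _ hs]
    exact tendsto_nhds_unique h1 h2
  · -- monotone
    intro l hl μ hμ hle
    have hev : ∀ᶠ s in atTop, f (WithLp.toLp 2 (Fin.snoc l s : Fin (m+1) → ℝ)) ≤ f (WithLp.toLp 2 (Fin.snoc μ s : Fin (m+1) → ℝ)) := by
      filter_upwards [hS_ev l hl] with s hs
      have hd : ∀ i, 0 ≤ (Fin.snoc (μ - l) 0 : Fin (m+1) → ℝ) i := by
        intro i
        refine Fin.lastCases ?_ (fun j => ?_) i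
        · simp only [Fin.snoc_last]; exact le_refl 0
        · simp only [Fin.snoc_castSucc, Pi.sub_apply]
          exact sub_nonneg.2 (hle j)
      have hmono := hf_mono _ hs (WithLp.toLp 2 (Fin.snoc (μ - l) 0 : Fin (m+1) → ℝ)) hd
      have heq : WithLp.toLp 2 (Fin.snoc l s : Fin (m+1) → ℝ)
          + WithLp.toLp 2 (Fin.snoc (μ - l) 0 : Fin (m+1) → ℝ)
          = WithLp.toLp 2 (Fin.snoc μ s : Fin (m+1) → ℝ) := by
        rw [snoc_add]; simp
      rw [heq] at hmono
      exact hmono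
    exact le_of_tendsto_of_tendsto (hlim l hl) (hlim μ hμ) hev
  · -- concavity
    refine ⟨hproj_convex, ?_⟩
    intro l hl μ hμ a b ha hb hab
    rcases eq_or_lt_of_le ha with rfl | ha'
    · have hb1 : b = 1 := by linarith
      subst hb1
      simp
    rcases eq_or_lt_of_le hb with rfl | hb'
    · have ha1 : a = 1 := by linarith
      subst ha1
      simp
    have hmem : a • l + b • μ ∈ projCone Γ := hproj_convex hl hμ ha hb hab
    have hev : ∀ᶠ s in atTop,
        a * f (WithLp.toLp 2 (Fin.snoc l s : Fin (m+1) → ℝ)) + b * f (WithLp.toLp 2 (Fin.snoc μ s : Fin (m+1) → ℝ)) ≤ f (WithLp.toLp 2 (Fin.snoc (a • l + b • μ) s : Fin (m+1) → ℝ)) := by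
      filter_upwards [hS_ev l hl, hS_ev μ hμ] with s h1 h2
      have hconc := hf3.2 h1 h2 ha hb hab
      rw [snoc_combo] at hconc
      have hss : a * s + b * s = s := by
        rw [← add_mul, hab, one_mul]
      rw [hss] at hconc
      simpa [smul_eq_mul] using hconc
    have ht1 : Tendsto (fun s : ℝ => a * f (WithLp.toLp 2 (Fin.snoc l s : Fin (m+1) → ℝ)) + b * f (WithLp.toLp 2 (Fin.snoc μ s : Fin (m+1) → ℝ))) atTop
        (nhds (a * finf l + b * finf μ)) :=
      ((hlim l hl).const_mul a).add ((hlim μ hμ).const_mul b)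
    have := le_of_tendsto_of_tendsto ht1 (hlim _ hmem) hev
    simpa [smul_eq_mul] using this
  · -- continuity
    have hconc : ConcaveOn ℝ (projCone Γ) finf := by
      refine ⟨hproj_convex, ?_⟩
      intro l hl μ hμ a b ha hb hab
      rcases eq_or_lt_of_le ha with rfl | ha'
      · have hb1 : b = 1 := by linarith
        subst hb1
        simp
      rcases eq_or_lt_of_le hb with rfl | hb'
      · have ha1 : a = 1 := by linarith
        subst ha1
        simp
      have hmem : a • l + b • μ ∈ projCone Γ := hproj_convex hl hμ ha hb hab
      have hev : ∀ᶠ s in atTop,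
          a * f (WithLp.toLp 2 (Fin.snoc l s : Fin (m+1) → ℝ)) + b * f (WithLp.toLp 2 (Fin.snoc μ s : Fin (m+1) → ℝ)) ≤ f (WithLp.toLp 2 (Fin.snoc (a • l + b • μ) s : Fin (m+1) → ℝ)) := by
        filter_upwards [hS_ev l hl, hS_ev μ hμ] with s h1 h2
        have hconc := hf3.2 h1 h2 ha hb hab
        rw [snoc_combo] at hconc
        have hss : a * s + b * s = s := by
          rw [← add_mul, hab, one_mul]
        rw [hss] at hconc
        simpa [smul_eq_mul] using hconc
      have ht1 : Tendsto (fun s : ℝ => a * f (WithLp.toLp 2 (Fin.snoc l s : Fin (m+1) → ℝ)) + b * f (WithLp.toLp 2 (Fin.snoc μ s : Fin (m+1) → ℝ))) atTop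
          (nhds (a * finf l + b * finf μ)) :=
        ((hlim l hl).const_mul a).add ((hlim μ hμ).const_mul b)
      have := le_of_tendsto_of_tendsto ht1 (hlim _ hmem) hev
      simpa [smul_eq_mul] using this
    exact hconc.continuousOn hproj_open
end

section
/- If λ ∈ Γ and λ_i ≤ λ_j for two indices i, j, then ∂f/∂λ_i(λ) ≥ ∂f/∂λ_j(λ); in particular, if λ_1 ≤ λ_2 ≤ … ≤ λ_n then ∂f/∂λ_1(λ) ≥ ∂f/∂λ_2(λ) ≥ … ≥ ∂f/∂λ_n(λ). -/
open Real Set Filter Topology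

/-- Permutation of coordinates as a continuous linear map on Euclidean space. -/
noncomputable def permCLM15 {n : ℕ} (σ : Equiv.Perm (Fin n)) :
    EuclideanSpace ℝ (Fin n) →L[ℝ] EuclideanSpace ℝ (Fin n) :=
  LinearMap.toContinuousLinearMap
    { toFun := fun y => WithLp.toLp 2 (fun k => y (σ k))
      map_add' := by intro a b; rfl
      map_smul' := by intro c a; rfl }

lemma permCLM15_apply {n : ℕ} (σ : Equiv.Perm (Fin n)) (y : EuclideanSpace ℝ (Fin n)) :
    permCLM15 σ y = WithLp.toLp 2 (fun k => y (σ k)) := rfl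

/-- Equal coordinates give equal partial derivatives, by symmetry. -/
lemma partials_eq_of_eq {n : ℕ}
    (Γ : Set (EuclideanSpace ℝ (Fin n)))
    (hΓ_open : IsOpen Γ)
    (hΓ_symm : ∀ σ : Equiv.Perm (Fin n), ∀ x ∈ Γ, WithLp.toLp 2 (fun i => x (σ i)) ∈ Γ)
    (f : EuclideanSpace ℝ (Fin n) → ℝ)
    (hf_diff : ∀ x ∈ Γ, DifferentiableAt ℝ f x)
    (hf_symm : ∀ σ : Equiv.Perm (Fin n), ∀ x ∈ Γ, f (WithLp.toLp 2 (fun i => x (σ i))) = f x)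
    {x : EuclideanSpace ℝ (Fin n)} (hx : x ∈ Γ) {i j : Fin n} (hij : x i = x j) :
    fderiv ℝ f x (EuclideanSpace.single j 1) = fderiv ℝ f x (EuclideanSpace.single i 1) := by
  set σ : Equiv.Perm (Fin n) := Equiv.swap i j with hσ
  set T := permCLM15 σ with hT
  have hTx : T x = x := by
    ext k
    show x (Equiv.swap i j k) = x k
    rcases eq_or_ne k i with rfl | hki
    · rw [Equiv.swap_apply_left]; exact hij.symm
    rcases eq_or_ne k j with rfl | hkj
    · rw [Equiv.swap_apply_right]; exact hij
    · rw [Equiv.swap_apply_of_ne_of_ne hki hkj]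
  have hU : Γ ∩ T ⁻¹' Γ ∈ 𝓝 x := by
    refine (IsOpen.mem_nhds (hΓ_open.inter (hΓ_open.preimage T.continuous)) ?_)
    exact ⟨hx, by simpa [Set.mem_preimage, hTx] using hx⟩
  have hEq : (fun y => f (T y)) =ᶠ[𝓝 x] f := by
    filter_upwards [hU] with y hy
    have := hf_symm σ y hy.1
    exact this
  have hcomp : fderiv ℝ (fun y => f (T y)) x = (fderiv ℝ f (T x)).comp T := by
    have h1 : DifferentiableAt ℝ f (T x) := by rw [hTx]; exact hf_diff x hx
    have := (h1.hasFDerivAt.comp x (T.hasFDerivAt)).fderiv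
    exact this
  have key : (fderiv ℝ f x).comp T = fderiv ℝ f x := by
    have h : fderiv ℝ (fun y => f (T y)) x = fderiv ℝ f x := hEq.fderiv_eq
    rw [hcomp, hTx] at h
    exact h
  have hTi : T (EuclideanSpace.single i (1:ℝ)) = EuclideanSpace.single j 1 := by
    ext k
    rw [permCLM15_apply]
    simp only [EuclideanSpace.single_apply]
    have : σ k = i ↔ k = j := by
      constructor
      · intro h; have := congrArg σ h; simpa [σ, Equiv.swap_apply_self, Equiv.swap_apply_left] using this
      · rintro rfl; simp [σ, Equiv.swap_apply_right]
    simp [this]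
  calc fderiv ℝ f x (EuclideanSpace.single j 1)
      = fderiv ℝ f x (T (EuclideanSpace.single i 1)) := by rw [hTi]
    _ = ((fderiv ℝ f x).comp T) (EuclideanSpace.single i 1) := rfl
    _ = fderiv ℝ f x (EuclideanSpace.single i 1) := by rw [key]

/-- If λ ∈ Γ and λ_i ≤ λ_j, then ∂f/∂λ_i(λ) ≥ ∂f/∂λ_j(λ); in particular, if
λ_1 ≤ … ≤ λ_n then ∂f/∂λ_1(λ) ≥ … ≥ ∂f/∂λ_n(λ). -/
theorem partials_antitone_of_concave_symmetric
    {n : ℕ} (hn : 2 ≤ n)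
    (Γ : Set (EuclideanSpace ℝ (Fin n)))
    (hΓ_open : IsOpen Γ)
    (hΓ_convex : Convex ℝ Γ)
    (hΓ_cone : ∀ s : ℝ, 0 < s → ∀ x ∈ Γ, s • x ∈ Γ)
    (hΓ_symm : ∀ σ : Equiv.Perm (Fin n), ∀ x ∈ Γ, WithLp.toLp 2 (fun i => x (σ i)) ∈ Γ)
    (f : EuclideanSpace ℝ (Fin n) → ℝ)
    (hf_diff : ∀ x ∈ Γ, DifferentiableAt ℝ f x)
    (hf_symm : ∀ σ : Equiv.Perm (Fin n), ∀ x ∈ Γ, f (WithLp.toLp 2 (fun i => x (σ i))) = f x)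
    (hf3 : ConcaveOn ℝ Γ f) :
    ∀ x ∈ Γ,
      (∀ i j : Fin n, x i ≤ x j →
        fderiv ℝ f x (EuclideanSpace.single j 1) ≤ fderiv ℝ f x (EuclideanSpace.single i 1)) ∧
      (Monotone (fun i => x i) →
        Antitone (fun i => fderiv ℝ f x (EuclideanSpace.single i 1))) := by
  intro x hx
  have main : ∀ i j : Fin n, x i ≤ x j →
      fderiv ℝ f x (EuclideanSpace.single j 1) ≤ fderiv ℝ f x (EuclideanSpace.single i 1) := by
    intro i j hij
    rcases eq_or_lt_of_le hij with heq | hlt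
    · exact le_of_eq (partials_eq_of_eq Γ hΓ_open hΓ_symm f hf_diff hf_symm hx heq)
    -- strict case: use concavity with the swapped point
    · set σ : Equiv.Perm (Fin n) := Equiv.swap i j with hσ
      set y : EuclideanSpace ℝ (Fin n) := WithLp.toLp 2 (fun k => x (σ k)) with hy
      have hyΓ : y ∈ Γ := hΓ_symm σ x hx
      have hfy : f y = f x := hf_symm σ x hx
      set c : ℝ := x j - x i with hc
      have hcpos : 0 < c := by simp [hc, hlt]
      set v : EuclideanSpace ℝ (Fin n) := y - x with hv
      have hvsmul : v = c • (EuclideanSpace.single i (1:ℝ) - EuclideanSpace.single j 1) := by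
        ext k
        show y k - x k = c * ((EuclideanSpace.single i (1:ℝ)) k - (EuclideanSpace.single j (1:ℝ)) k)
        simp only [EuclideanSpace.single_apply]
        show x (Equiv.swap i j k) - x k = c * _
        rcases eq_or_ne k i with rfl | hki
        · have hne : k ≠ j := by rintro rfl; exact absurd rfl (ne_of_lt hlt)
          rw [Equiv.swap_apply_left, if_pos rfl, if_neg hne, hc]; ring
        rcases eq_or_ne k j with rfl | hkj
        · rw [Equiv.swap_apply_right, if_neg hki, if_pos rfl, hc]; ring
        · rw [Equiv.swap_apply_of_ne_of_ne hki hkj, if_neg hki, if_neg hkj]; ring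
      -- the line t ↦ x + t • v
      set L : ℝ →ᵃ[ℝ] EuclideanSpace ℝ (Fin n) := AffineMap.lineMap x y with hL
      have hL0 : L 0 = x := AffineMap.lineMap_apply_zero x y
      have hL1 : L 1 = y := AffineMap.lineMap_apply_one x y
      have hgconc : ConcaveOn ℝ (L ⁻¹' Γ) (f ∘ L) := hf3.comp_affineMap L
      have hgconv : ConvexOn ℝ (⇑L ⁻¹' Γ) (-(f ∘ ⇑L)) := hgconc.neg
      have h0 : (0:ℝ) ∈ L ⁻¹' Γ := by simp [Set.mem_preimage, hL0, hx]
      have h1 : (1:ℝ) ∈ L ⁻¹' Γ := by simp [Set.mem_preimage, hL1, hyΓ]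
      -- derivative of f ∘ L at 0
      have hLder : HasDerivAt (fun t : ℝ => L t) v 0 := by
        have : HasDerivAt (fun t : ℝ => x + t • v) v 0 := by
          simpa using ((hasDerivAt_id (0:ℝ)).smul_const v).const_add x
        convert this using 1
        funext t
        show AffineMap.lineMap x y t = x + t • v
        rw [AffineMap.lineMap_apply_module]
        module
      have hfd : HasFDerivAt f (fderiv ℝ f x) (L 0) := by
        rw [hL0]; exact (hf_diff x hx).hasFDerivAt
      have hder : HasDerivAt (f ∘ (fun t : ℝ => L t)) (fderiv ℝ f x v) 0 :=
        hfd.comp_hasDerivAt 0 hLder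
      have hnegder : HasDerivAt (-(f ∘ ⇑L)) (-(fderiv ℝ f x v)) 0 := by
        exact hder.neg
      have hslope := hgconv.le_slope_of_hasDerivAt h0 h1 one_pos hnegder
      have hslope1 : slope (-(f ∘ ⇑L)) 0 1 = 0 := by
        simp [slope_def_field, hL0, hL1, hfy]
      rw [hslope1] at hslope
      have hnn : 0 ≤ fderiv ℝ f x v := by linarith
      have hexp : fderiv ℝ f x v
          = c * (fderiv ℝ f x (EuclideanSpace.single i 1) - fderiv ℝ f x (EuclideanSpace.single j 1)) := by
        rw [hvsmul]
        rw [map_smul, map_sub]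
        simp [smul_eq_mul, hc]
      rw [hexp] at hnn
      nlinarith
  refine ⟨main, fun hmono i j hij => main i j (hmono hij)⟩
end
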